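/- Every ordered context-free grammar in Chomsky normal form (in which every nonterminal is useful) is well-ordered: for every string w the set P_G(w) of parse trees is well-ordered under the lexicographic order ≺_G. -/

import Mathlib

namespace Ocfg

/-- A symbol: nonterminal or terminal. -/
inductive Sym (N T : Type) : Type
  | nt : N → Sym N T
  | tm : T → Sym N T

/-- An (ordered) context-free grammar: each nonterminal has an ordered
list of right-hand sides; `start` is the start nonterminal. -/
structure OCFG (N T : Type) : Type where
  prods : N → List (List (Sym N T))
  start : N

/-- Ordered ranked trees used as parse trees: terminal leaves, ε-leaves,
and internal nodes labelled by a nonterminal together with the index of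
the rule applied there. -/
inductive PTree (N T : Type) : Type
  | leaf : T → PTree N T
  | eps  : PTree N T
  | node : N → ℕ → List (PTree N T) → PTree N T

mutual
/-- `ParseFrom G A w t`: `t` is a parse tree with root nonterminal `A`
and yield `w`. -/
inductive ParseFrom {N T : Type} (G : OCFG N T) : N → List T → PTree N T → Prop
  | epsNode (A : N) (i : ℕ) :
      (G.prods A)[i]? = some [] →
      ParseFrom G A [] (PTree.node A i [PTree.eps])
  | node (A : N) (i : ℕ) (r : List (Sym N T)) (w : List T) (cs : List (PTree N T)) :
      (G.prods A)[i]? = some r → r ≠ [] → ParseSeq G r w cs →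
      ParseFrom G A w (PTree.node A i cs)

/-- `ParseSeq G r w cs`: the trees `cs` match, in order, the symbols of `r`,
with concatenated yield `w`. -/
inductive ParseSeq {N T : Type} (G : OCFG N T) : List (Sym N T) → List T → List (PTree N T) → Prop
  | nil : ParseSeq G [] [] []
  | consTm (a : T) (r : List (Sym N T)) (w : List T) (cs : List (PTree N T)) :
      ParseSeq G r w cs →
      ParseSeq G (Sym.tm a :: r) (a :: w) (PTree.leaf a :: cs)
  | consNt (A : N) (t : PTree N T) (wA : List T) (r : List (Sym N T)) (w : List T)
      (cs : List (PTree N T)) :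
      ParseFrom G A wA t → ParseSeq G r w cs →
      ParseSeq G (Sym.nt A :: r) (wA ++ w) (t :: cs)
end

/-- The set `P_G(w)` of parse trees of `w`. -/
def parseTrees {N T : Type} (G : OCFG N T) (w : List T) : Set (PTree N T) :=
  {t | ParseFrom G G.start w t}

/-- `n(t)`: the sequence of rule indices of `t`, in pre-order. -/
def PTree.idxSeq {N T : Type} : PTree N T → List ℕ
  | .leaf _ => []
  | .eps => []
  | .node _ i cs => i :: (cs.attach.map (fun c => PTree.idxSeq c.1)).flatten
decreasing_by
  have := List.sizeOf_lt_of_mem c.2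
  simp_wf
  omega

/-- The order `≺_G` on parse trees: lexicographic comparison of the
pre-order rule-index sequences. -/
def treeLT {N T : Type} (t₁ t₂ : PTree N T) : Prop :=
  List.Lex (· < ·) t₁.idxSeq t₂.idxSeq

/-- One-step derivation relation `⇒` of the underlying CFG. -/
def OCFG.Step {N T : Type} (G : OCFG N T) (u v : List (Sym N T)) : Prop :=
  ∃ (u₁ u₂ : List (Sym N T)) (A : N) (r : List (Sym N T)),
    r ∈ G.prods A ∧ u = u₁ ++ Sym.nt A :: u₂ ∧ v = u₁ ++ r ++ u₂

/-- `⇒*`. -/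
def OCFG.Derives {N T : Type} (G : OCFG N T) : List (Sym N T) → List (Sym N T) → Prop :=
  Relation.ReflTransGen G.Step

/-- A nonterminal is useful if it occurs in some sentential form derivable from
the start symbol and derives some terminal string. -/
def Useful {N T : Type} (G : OCFG N T) (A : N) : Prop :=
  (∃ u₁ u₂ : List (Sym N T), G.Derives [Sym.nt G.start] (u₁ ++ Sym.nt A :: u₂)) ∧
  (∃ w : List T, G.Derives [Sym.nt A] (w.map Sym.tm))

/-- `G` is cyclic if `A ⇒⁺ A` for some nonterminal `A`. -/
def Cyclic {N T : Type} (G : OCFG N T) : Prop :=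
  ∃ A : N, Relation.TransGen G.Step [Sym.nt A] [Sym.nt A]

/-- `G` has no ε-rules. -/
def NoEpsRules {N T : Type} (G : OCFG N T) : Prop :=
  ∀ (A : N) (r : List (Sym N T)), r ∈ G.prods A → r ≠ []

/-- A unit-rule step: `A → B` is a rule of `G`. -/
def UnitStep {N T : Type} (G : OCFG N T) (A B : N) : Prop :=
  [Sym.nt B] ∈ G.prods A

/-- `G` has a cycle of unit rules. -/
def HasUnitCycle {N T : Type} (G : OCFG N T) : Prop :=
  ∃ A : N, Relation.TransGen (UnitStep G) A A

/-- `G` is well-ordered: for every string `w`, every nonempty subset of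
`P_G(w)` has a `≺_G`-least element. -/
def WellOrderedG {N T : Type} (G : OCFG N T) : Prop :=
  ∀ (w : List T) (Φ : Set (PTree N T)), Φ ⊆ parseTrees G w → Φ.Nonempty →
    ∃ t ∈ Φ, ∀ t' ∈ Φ, t = t' ∨ treeLT t t'

/-- `t` is the `≺_G`-least parse tree of `w`. -/
def IsLeastTree {N T : Type} (G : OCFG N T) (w : List T) (t : PTree N T) : Prop :=
  ParseFrom G G.start w t ∧ ∀ t', ParseFrom G G.start w t' → t = t' ∨ treeLT t t'

/-- `G` has least parse trees. -/
def HasLeastTrees {N T : Type} (G : OCFG N T) : Prop :=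
  ∀ w : List T, (parseTrees G w).Nonempty → ∃ t, IsLeastTree G w t

/-- Derivations of a given length (number of steps). -/
inductive DerivesIn {N T : Type} (G : OCFG N T) : List (Sym N T) → List (Sym N T) → ℕ → Prop
  | refl (u : List (Sym N T)) : DerivesIn G u u 0
  | step (u v w : List (Sym N T)) (n : ℕ) :
      G.Step u v → DerivesIn G v w n → DerivesIn G u w (n + 1)

/-- Number of rule applications in a parse tree (= length of the
corresponding leftmost derivation). -/
def PTree.numRules {N T : Type} : PTree N T → ℕ
  | .leaf _ => 0
  | .eps => 0
  | .node _ _ cs => 1 + ((cs.attach.map (fun c => PTree.numRules c.1)).foldr (· + ·) 0)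
decreasing_by
  have := List.sizeOf_lt_of_mem c.2
  simp_wf
  omega

/-- Height of a tree: a single leaf has height 0. -/
def PTree.height {N T : Type} : PTree N T → ℕ
  | .leaf _ => 0
  | .eps => 0
  | .node _ _ cs => 1 + ((cs.attach.map (fun c => PTree.height c.1)).foldr max 0)
decreasing_by
  have := List.sizeOf_lt_of_mem c.2
  simp_wf
  omega

/-- The language of `G`. -/
def langOf {N T : Type} (G : OCFG N T) : Language T :=
  {w | ∃ t, ParseFrom G G.start w t}

end Ocfg

namespace Ocfg

/-- Chomsky normal form: every rule is of the form `A → B C` or `A → a`,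
except possibly `S → ε` where the start symbol `S` occurs on no right-hand side. -/
def ChomskyNF {N T : Type} (G : OCFG N T) : Prop :=
  ∀ (A : N) (r : List (Sym N T)), r ∈ G.prods A →
    (∃ B C : N, r = [Sym.nt B, Sym.nt C]) ∨ (∃ a : T, r = [Sym.tm a]) ∨
    (r = [] ∧ A = G.start ∧
      ∀ (B : N) (r' : List (Sym N T)), r' ∈ G.prods B → Sym.nt G.start ∉ r')

end Ocfg
open Ocfg

/-!
In Chomsky normal form a parse tree of a nonempty string `w` is a binary tree with `|w|`
leaves, so its pre-order sequence of rule indices has length `2|w| - 1`, and its entries are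
bounded by the largest number of rules of a nonterminal. Only finitely many such sequences
exist. The sequence determines the tree, because the rule index at a node fixes the shape of
its children; hence `P_G(w)` is finite, `≺_G` is a strict linear order on it, and every nonempty
subset has a least element.
-/

theorem List.finite_length_le_forall_lt (L b : ℕ) :
    {l : List ℕ | l.length ≤ L ∧ ∀ x ∈ l, x < b}.Finite := by
  refine ((List.finite_length_le (Fin b) L).image (List.map Fin.val)).subset ?_
  rintro l ⟨hlen, hlt⟩
  exact ⟨l.pmap Fin.mk hlt, by simpa using hlen, by simp [List.map_pmap]⟩

namespace Ocfg

variable {N T : Type}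

lemma PTree.idxSeq_node (A : N) (i : ℕ) (cs : List (PTree N T)) :
    (PTree.node A i cs).idxSeq = i :: (cs.map PTree.idxSeq).flatten := by
  rw [PTree.idxSeq, List.attach_map_val (f := PTree.idxSeq)]

inductive CnfParse (G : OCFG N T) : N → List T → PTree N T → Prop
  | eps (A : N) (i : ℕ) :
      (G.prods A)[i]? = some [] → CnfParse G A [] (.node A i [.eps])
  | term (A : N) (i : ℕ) (a : T) :
      (G.prods A)[i]? = some [Sym.tm a] → CnfParse G A [a] (.node A i [.leaf a])
  | bin (A B C : N) (i : ℕ) (w₁ w₂ : List T) (t₁ t₂ : PTree N T) :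
      (G.prods A)[i]? = some [Sym.nt B, Sym.nt C] → CnfParse G B w₁ t₁ → CnfParse G C w₂ t₂ →
      CnfParse G A (w₁ ++ w₂) (.node A i [t₁, t₂])

theorem ParseFrom.cnfParse {G : OCFG N T} (hcnf : ChomskyNF G) {A : N} {w : List T}
    {t : PTree N T} (h : ParseFrom G A w t) : CnfParse G A w t := by
  cases h with
  | epsNode A i hi => exact .eps A i hi
  | node A i r w cs hi hne hseq =>
    rcases hcnf A r (List.mem_of_getElem? hi) with ⟨B, C, rfl⟩ | ⟨a, rfl⟩ | ⟨rfl, -⟩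
    · rcases hseq with _ | _ | ⟨_, t₁, w₁, _, _, _, h₁, _ | _ | ⟨_, t₂, w₂, _, _, _, h₂, ⟨⟩⟩⟩
      rw [List.append_nil]
      exact .bin A B C i w₁ w₂ t₁ t₂ hi (cnfParse hcnf h₁) (cnfParse hcnf h₂)
    · rcases hseq with _ | ⟨_, _, _, _, ⟨⟩⟩
      exact .term A i a hi
    · exact absurd rfl hne
termination_by sizeOf t

section
variable {G : OCFG N T}

theorem ChomskyNF.eq_start_of_nil_mem (hcnf : ChomskyNF G) {A : N} (h : [] ∈ G.prods A) :
    A = G.start ∧ ∀ (B : N) (r : List (Sym N T)), r ∈ G.prods B → Sym.nt G.start ∉ r := by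
  simpa using hcnf A [] h

theorem CnfParse.nil_mem_prods_of_yield_eq_nil (hcnf : ChomskyNF G) {A : N} {w : List T}
    {t : PTree N T} (h : CnfParse G A w t) (hw : w = []) : [] ∈ G.prods A := by
  induction h with
  | eps A i hi => exact List.mem_of_getElem? hi
  | term => simp at hw
  | bin A B C i w₁ w₂ t₁ t₂ hi _ _ ih₁ =>
    obtain ⟨rfl, hstart⟩ := hcnf.eq_start_of_nil_mem (ih₁ (List.append_eq_nil_iff.mp hw).1)
    exact absurd (by simp) (hstart A _ (List.mem_of_getElem? hi))

theorem CnfParse.yield_ne_nil_of_mem_rhs (hcnf : ChomskyNF G) {A B : N} {r : List (Sym N T)}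
    (hr : r ∈ G.prods A) (hB : Sym.nt B ∈ r) {w : List T} {t : PTree N T}
    (h : CnfParse G B w t) : w ≠ [] := by
  intro hw
  obtain ⟨rfl, hstart⟩ := hcnf.eq_start_of_nil_mem (h.nil_mem_prods_of_yield_eq_nil hcnf hw)
  exact hstart A r hr hB

theorem CnfParse.length_idxSeq_add_one_le (hcnf : ChomskyNF G) {A : N} {w : List T}
    {t : PTree N T} (h : CnfParse G A w t) : t.idxSeq.length + 1 ≤ max 2 (2 * w.length) := by
  induction h with
  | eps | term => simp [PTree.idxSeq_node, PTree.idxSeq]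
  | bin A B C i w₁ w₂ t₁ t₂ hi h₁ h₂ ih₁ ih₂ =>
    have hr := List.mem_of_getElem? hi
    have hw₁ := List.length_pos_iff.mpr (h₁.yield_ne_nil_of_mem_rhs hcnf hr (by simp))
    have hw₂ := List.length_pos_iff.mpr (h₂.yield_ne_nil_of_mem_rhs hcnf hr (by simp))
    simp only [PTree.idxSeq_node, List.map_cons, List.map_nil, List.flatten_cons,
      List.flatten_nil, List.append_nil, List.length_cons, List.length_append]
    omega

theorem CnfParse.forall_mem_idxSeq_lt {b : ℕ} (hb : ∀ A, (G.prods A).length ≤ b) {A : N}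
    {w : List T} {t : PTree N T} (h : CnfParse G A w t) : ∀ j ∈ t.idxSeq, j < b := by
  induction h with
  | eps A i hi | term A i _ hi =>
    simpa [PTree.idxSeq_node, PTree.idxSeq] using
      (List.getElem?_eq_some_iff.mp hi).1.trans_le (hb A)
  | bin A B C i w₁ w₂ t₁ t₂ hi _ _ ih₁ ih₂ =>
    simp only [PTree.idxSeq_node, List.map_cons, List.map_nil, List.flatten_cons,
      List.flatten_nil, List.append_nil, List.mem_cons, List.mem_append]
    rintro j (rfl | hj | hj)
    exacts [(List.getElem?_eq_some_iff.mp hi).1.trans_le (hb A), ih₁ j hj, ih₂ j hj]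

/-- The pre-order index sequence is a prefix code: the rule index at the root fixes the
shape of the root's children. -/
theorem CnfParse.eq_of_idxSeq_append_eq {A : N} {w w' : List T} {t t' : PTree N T}
    (h : CnfParse G A w t) (h' : CnfParse G A w' t') {s s' : List ℕ}
    (he : t.idxSeq ++ s = t'.idxSeq ++ s') : t = t' ∧ s = s' := by
  induction h generalizing w' t' s s' with
  | eps A i hi =>
    cases h' with
    | eps _ i' hi' => simp_all [PTree.idxSeq_node, PTree.idxSeq]
    | term _ i' a hi' | bin _ _ _ i' _ _ _ _ hi' =>
      simp only [PTree.idxSeq_node, List.cons_append, List.cons.injEq] at he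
      simp [he.1, hi'] at hi
  | term A i a hi =>
    cases h' with
    | term _ i' a' hi' =>
      simp only [PTree.idxSeq_node, List.cons_append, List.cons.injEq] at he
      simp_all [PTree.idxSeq]
    | eps _ i' hi' | bin _ _ _ i' _ _ _ _ hi' =>
      simp only [PTree.idxSeq_node, List.cons_append, List.cons.injEq] at he
      simp [he.1, hi'] at hi
  | bin A B C i w₁ w₂ t₁ t₂ hi _ _ ih₁ ih₂ =>
    cases h' with
    | bin _ B' C' i' _ _ t₁' t₂' hi' h₁' h₂' =>
      simp only [PTree.idxSeq_node, List.map_cons, List.map_nil, List.flatten_cons,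
        List.flatten_nil, List.append_nil, List.cons_append, List.append_assoc,
        List.cons.injEq] at he
      obtain ⟨rfl, he⟩ := he
      obtain ⟨rfl, rfl⟩ : B = B' ∧ C = C' := by simpa [hi] using hi'
      obtain ⟨rfl, he₂⟩ := ih₁ h₁' he
      obtain ⟨rfl, rfl⟩ := ih₂ h₂' he₂
      exact ⟨rfl, rfl⟩
    | eps _ i' hi' | term _ i' _ hi' =>
      simp only [PTree.idxSeq_node, List.cons_append, List.cons.injEq] at he
      simp [he.1, hi'] at hi

theorem ChomskyNF.injOn_idxSeq (hcnf : ChomskyNF G) (w : List T) :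
    Set.InjOn PTree.idxSeq (parseTrees G w) := fun _ ht _ ht' he =>
  ((ParseFrom.cnfParse hcnf ht).eq_of_idxSeq_append_eq (ParseFrom.cnfParse hcnf ht')
    (s := []) (s' := []) (by rw [he])).1

theorem ChomskyNF.finite_parseTrees [Finite N] (hcnf : ChomskyNF G) (w : List T) :
    (parseTrees G w).Finite := by
  obtain ⟨b, hb⟩ := (Set.finite_range fun A => (G.prods A).length).bddAbove
  refine Set.Finite.of_finite_image ?_ (hcnf.injOn_idxSeq w)
  refine (List.finite_length_le_forall_lt (max 2 (2 * w.length)) b).subset ?_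
  rintro _ ⟨t, ht, rfl⟩
  have h := ParseFrom.cnfParse hcnf ht
  exact ⟨by linarith [h.length_idxSeq_add_one_le hcnf],
    h.forall_mem_idxSeq_lt fun A => hb ⟨A, rfl⟩⟩

end

end Ocfg

/-- Every oCFG in Chomsky normal form (with all nonterminals
useful) is well-ordered. -/
theorem stmt4 {N T : Type} [Fintype N] [Fintype T] (G : OCFG N T)
    (hcnf : ChomskyNF G) (huseful : ∀ A : N, Useful G A) :
    WellOrderedG G := by
  intro w Φ hΦ hne
  obtain ⟨t, ht, hmin⟩ :=
    Set.exists_min_image Φ PTree.idxSeq ((hcnf.finite_parseTrees w).subset hΦ) hne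
  refine ⟨t, ht, fun t' ht' => ?_⟩
  rcases (hmin t' ht').lt_or_eq with hlt | he
  · exact Or.inr hlt
  · exact Or.inl (hcnf.injOn_idxSeq w (hΦ ht) (hΦ ht') he)
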